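/- arXiv:2502.05355 — 2 statements merged into one kernel-verified Lean document; each statement's English description precedes it below -/
import Mathlib

section
/- Assume NGMRES(m) with window size m ≥ 1, full AA, and GMRES are applied to Ax = b with the same initial guess x_0 ≠ x*, that A ∈ R^{n×n} is invertible, and that A is either symmetric or shifted skew-symmetric of the form A = αI + S with S skew-symmetric. Assume for some k_0 > 0 that r_{k_0−1}^G ≠ 0 and ‖r_{k−1}^G‖₂ > ‖r_k^G‖₂ for each k with 0 < k < k_0. Then for all 0 ≤ j ≤ k_0 and every positive integer m, x_j^{NG(m)} = x_j^G, and x_{j+1}^A = q(x_j^{NG(m)}) = x_j^{NG(m)} − r_j^{NG(m)}. -/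
/-!
The GMRES iterate `x_k` is the unique point of `x₀ + K_k` whose residual is orthogonal to
`A K_k`. Strict decrease of the residual norms keeps `r_k ∉ K_k`, hence
`K_{k+1} = K_{k-1} ⊕ span {x_k - x_{k-1}, r_k}`. When `Aᵀ ∈ span {1, A}` (symmetric or shifted
skew-symmetric `A`) we get `A r_k ⊥ A K_{k-1}`, which yields the three-term recurrence
`x_{k+1} - x_k ∈ span {r_k, x_k - x_{k-1}}`. So `x_{k+1}` is among the NGMRES(m) candidates for
every `m ≥ 1`, and the NGMRES minimizer, which lies in `x₀ + K_{k+1}`, must be `x_{k+1}`.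
For full AA, once `x^A_{i+1} = q(x_i)` for `i < j`, the affine hull of `x^A_0, …, x^A_j` is
`x₀ + K_j`, so the AA mixing point is `x_j` and `x^A_{j+1} = q(x_j)`.
-/

open Matrix Filter

noncomputable section

/-- The residual `r(x) = A x - b` of the linear system `A x = b`. -/
def residv {n : ℕ} (A : Matrix (Fin n) (Fin n) ℝ) (b x : Fin n → ℝ) : Fin n → ℝ :=
  A.mulVec x - b

/-- The Euclidean 2-norm on `Fin n → ℝ`. -/
def norm2 {n : ℕ} (x : Fin n → ℝ) : ℝ := Real.sqrt (x ⬝ᵥ x)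

/-- The fixed-point map `q(x) = M x + b` with `M = I - A`. -/
def qmap {n : ℕ} (A : Matrix (Fin n) (Fin n) ℝ) (b x : Fin n → ℝ) : Fin n → ℝ :=
  (1 - A).mulVec x + b

/-- One NGMRES update from step `k`, with window `mk` and coefficients `β`:
`x_{k+1} = q(x_k) + ∑_{i=0}^{mk} β_i (q(x_k) - x_{k-i})`. -/
def ngmresUpdate {n : ℕ} (A : Matrix (Fin n) (Fin n) ℝ) (b : Fin n → ℝ)
    (x : ℕ → Fin n → ℝ) (β : ℕ → ℝ) (k mk : ℕ) : Fin n → ℝ :=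
  qmap A b (x k) + ∑ i ∈ Finset.range (mk + 1), β i • (qmap A b (x k) - x (k - i))

/-- The NGMRES iteration with window function `mk` (e.g. `mk k = min k m` for NGMRES(m),
`mk k = k` for full NGMRES): each step uses coefficients minimizing the 2-norm of the
next residual. -/
def IsNGMRES {n : ℕ} (A : Matrix (Fin n) (Fin n) ℝ) (b x0 : Fin n → ℝ) (mk : ℕ → ℕ)
    (x : ℕ → Fin n → ℝ) (β : ℕ → ℕ → ℝ) : Prop :=
  x 0 = x0 ∧ ∀ k, x (k + 1) = ngmresUpdate A b x (β k) k (mk k) ∧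
    ∀ β' : ℕ → ℝ, norm2 (residv A b (x (k + 1))) ≤
      norm2 (residv A b (ngmresUpdate A b x β' k (mk k)))

/-- The Krylov subspace `span {r0, A r0, …, A^{k-1} r0}`. -/
def krylov {n : ℕ} (A : Matrix (Fin n) (Fin n) ℝ) (r0 : Fin n → ℝ) (k : ℕ) :
    Submodule ℝ (Fin n → ℝ) :=
  Submodule.span ℝ {v | ∃ i < k, v = (A ^ i).mulVec r0}

/-- GMRES: `x_k` minimizes the residual 2-norm over the affine space `x0 + K_k`. -/
def IsGMRES {n : ℕ} (A : Matrix (Fin n) (Fin n) ℝ) (b x0 : Fin n → ℝ)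
    (x : ℕ → Fin n → ℝ) : Prop :=
  x 0 = x0 ∧ ∀ k, x k - x0 ∈ krylov A (residv A b x0) k ∧
    ∀ y : Fin n → ℝ, y - x0 ∈ krylov A (residv A b x0) k →
      norm2 (residv A b (x k)) ≤ norm2 (residv A b y)

/-- One Anderson acceleration update from step `k`, with window `mk`:
`x_{k+1} = q(x_k) + ∑_{i=1}^{mk} γ_i (q(x_k) - q(x_{k-i}))`. -/
def aaUpdate {n : ℕ} (A : Matrix (Fin n) (Fin n) ℝ) (b : Fin n → ℝ)
    (x : ℕ → Fin n → ℝ) (γ : ℕ → ℝ) (k mk : ℕ) : Fin n → ℝ :=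
  qmap A b (x k) + ∑ i ∈ Finset.Icc 1 mk, γ i • (qmap A b (x k) - qmap A b (x (k - i)))

/-- The Anderson acceleration least-squares objective
`r(x_k) + ∑_{i=1}^{mk} γ_i (r(x_k) - r(x_{k-i}))`. -/
def aaObj {n : ℕ} (A : Matrix (Fin n) (Fin n) ℝ) (b : Fin n → ℝ)
    (x : ℕ → Fin n → ℝ) (γ : ℕ → ℝ) (k mk : ℕ) : Fin n → ℝ :=
  residv A b (x k) + ∑ i ∈ Finset.Icc 1 mk, γ i • (residv A b (x k) - residv A b (x (k - i)))

/-- Anderson acceleration with window function `mk`. -/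
def IsAA {n : ℕ} (A : Matrix (Fin n) (Fin n) ℝ) (b x0 : Fin n → ℝ) (mk : ℕ → ℕ)
    (x : ℕ → Fin n → ℝ) (γ : ℕ → ℕ → ℝ) : Prop :=
  x 0 = x0 ∧ ∀ k, x (k + 1) = aaUpdate A b x (γ k) k (mk k) ∧
    ∀ γ' : ℕ → ℝ, norm2 (aaObj A b x (γ k) k (mk k)) ≤ norm2 (aaObj A b x γ' k (mk k))

/-- The spectral norm `‖A‖₂` (the ℓ²→ℓ² operator norm). -/
def specNorm {n : ℕ} (A : Matrix (Fin n) (Fin n) ℝ) : ℝ :=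
  ‖LinearMap.toContinuousLinearMap (Matrix.toEuclideanLin A)‖

/-- The spectral radius of a real matrix (computed over `ℂ`). -/
def specRad {n : ℕ} (M : Matrix (Fin n) (Fin n) ℝ) : ℝ :=
  (spectralRadius ℂ (M.map Complex.ofReal)).toReal

section DotProduct

variable {ι : Type*} [Fintype ι]

lemma dotProduct_self_nonneg (v : ι → ℝ) : 0 ≤ v ⬝ᵥ v := by
  simpa using dotProduct_self_star_nonneg v

lemma dotProduct_eq_zero_of_forall_dotProduct_self_le {r u : ι → ℝ}
    (h : ∀ t : ℝ, r ⬝ᵥ r ≤ (r + t • u) ⬝ᵥ (r + t • u)) : r ⬝ᵥ u = 0 := by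
  have hu := dotProduct_self_nonneg u
  have key : ∀ t : ℝ, 0 ≤ 2 * t * (r ⬝ᵥ u) + t ^ 2 * (u ⬝ᵥ u) := by
    intro t
    have := h t
    simp only [dotProduct_add, add_dotProduct, dotProduct_smul, smul_dotProduct, smul_eq_mul,
      dotProduct_comm u r] at this
    nlinarith
  -- with `c = r ⬝ᵥ u` and `s = u ⬝ᵥ u`, `2 t c + t² s` is negative at `t = -c / (s + 1)`
  -- unless `c = 0`
  have := key (-(r ⬝ᵥ u) / (u ⬝ᵥ u + 1))
  have hs : 0 < u ⬝ᵥ u + 1 := by linarith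
  rw [div_pow, neg_sq, ← sub_nonneg] at this
  field_simp at this
  nlinarith [sq_nonneg (r ⬝ᵥ u)]

end DotProduct

section GMRESTheory

variable {n : ℕ}

lemma norm2_le_norm2_iff {x y : Fin n → ℝ} : norm2 x ≤ norm2 y ↔ x ⬝ᵥ x ≤ y ⬝ᵥ y :=
  Real.sqrt_le_sqrt_iff (dotProduct_self_nonneg y)

lemma norm2_lt_norm2_iff {x y : Fin n → ℝ} : norm2 x < norm2 y ↔ x ⬝ᵥ x < y ⬝ᵥ y :=
  Real.sqrt_lt_sqrt_iff (dotProduct_self_nonneg x)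

lemma ne_zero_of_norm2_lt {x y : Fin n → ℝ} (h : norm2 x < norm2 y) : y ≠ 0 := by
  rintro rfl
  rw [norm2_lt_norm2_iff, dotProduct_zero] at h
  exact h.not_ge (dotProduct_self_nonneg x)

lemma Submodule.sup_span_singleton_eq_of_notMem {K V : Type*} [DivisionRing K] [AddCommGroup V]
    [Module K V] {U : Submodule K V} {u v : V} (hv : v ∈ U ⊔ K ∙ u) (hvU : v ∉ U) :
    U ⊔ K ∙ v = U ⊔ K ∙ u := by
  have hu : u ∈ U ⊔ K ∙ v := by
    have := mem_span_insert_exchange (K := K) (s := (U : Set V)) (x := v) (y := u)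
    simp only [Submodule.span_insert, Submodule.span_eq, sup_comm] at this
    exact this hv hvU
  exact le_antisymm (sup_le le_sup_left (Submodule.span_singleton_le_iff_mem _ _ |>.2 hv))
    (sup_le le_sup_left (Submodule.span_singleton_le_iff_mem _ _ |>.2 hu))

section Residual

variable (A : Matrix (Fin n) (Fin n) ℝ) (b : Fin n → ℝ)

lemma residv_add (x w : Fin n → ℝ) : residv A b (x + w) = residv A b x + A *ᵥ w := by
  simp only [residv, mulVec_add]
  abel

lemma residv_sub_residv (x y : Fin n → ℝ) : residv A b x - residv A b y = A *ᵥ (x - y) := by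
  simp only [residv, mulVec_sub]
  abel

lemma qmap_eq_sub_residv (x : Fin n → ℝ) : qmap A b x = x - residv A b x := by
  simp only [qmap, residv, sub_mulVec, one_mulVec]
  abel

lemma qmap_add (x w : Fin n → ℝ) : qmap A b (x + w) = qmap A b x + (1 - A) *ᵥ w := by
  simp only [qmap, mulVec_add]
  abel

lemma qmap_sub_qmap (x y : Fin n → ℝ) : qmap A b x - qmap A b y = (1 - A) *ᵥ (x - y) := by
  simp only [qmap, mulVec_sub]
  abel

end Residual

section Krylov

variable (A : Matrix (Fin n) (Fin n) ℝ) (r0 : Fin n → ℝ)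

lemma krylov_mono : Monotone (krylov A r0) := fun _ _ h =>
  Submodule.span_mono fun _ ⟨i, hi, hv⟩ => ⟨i, hi.trans_le h, hv⟩

lemma krylov_zero : krylov A r0 0 = ⊥ := by
  simp [krylov]

lemma krylov_succ (k : ℕ) : krylov A r0 (k + 1) = krylov A r0 k ⊔ ℝ ∙ (A ^ k) *ᵥ r0 := by
  rw [krylov, krylov, ← Submodule.span_union]
  congr 1
  ext v
  simp only [Set.mem_ofPred_eq, Set.mem_union, Set.mem_singleton_iff, Nat.lt_succ_iff_lt_or_eq,
    or_and_right, exists_or, exists_eq_left]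

lemma krylov_one : krylov A r0 1 = ℝ ∙ r0 := by
  rw [krylov_succ, krylov_zero, bot_sup_eq, pow_zero, one_mulVec]

lemma self_mem_krylov_succ (k : ℕ) : r0 ∈ krylov A r0 (k + 1) :=
  krylov_mono A r0 (Nat.le_add_left 1 k) (krylov_one A r0 ▸ Submodule.mem_span_singleton_self r0)

variable {A r0}

lemma mulVec_mem_krylov_succ {k : ℕ} {w : Fin n → ℝ} (hw : w ∈ krylov A r0 k) :
    A *ᵥ w ∈ krylov A r0 (k + 1) := by
  induction hw using Submodule.span_induction with
  | mem u hu =>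
    obtain ⟨i, hi, rfl⟩ := hu
    rw [mulVec_mulVec, ← pow_succ']
    exact Submodule.subset_span ⟨i + 1, Nat.succ_lt_succ hi, rfl⟩
  | zero => simp
  | add u w _ _ hu hw => rw [mulVec_add]; exact Submodule.add_mem _ hu hw
  | smul t u _ hu => rw [mulVec_smul]; exact Submodule.smul_mem _ t hu

lemma exists_smul_add_mulVec_of_mem_krylov_succ {k : ℕ} {v : Fin n → ℝ}
    (hv : v ∈ krylov A r0 (k + 1)) : ∃ t : ℝ, ∃ w ∈ krylov A r0 k, v = t • r0 + A *ᵥ w := by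
  induction hv using Submodule.span_induction with
  | mem u hu =>
    obtain ⟨_ | i, hi, rfl⟩ := hu
    · exact ⟨1, 0, Submodule.zero_mem _, by simp⟩
    · refine ⟨0, (A ^ i) *ᵥ r0, Submodule.subset_span ⟨i, by omega, rfl⟩, ?_⟩
      rw [zero_smul, zero_add, mulVec_mulVec, pow_succ']
  | zero => exact ⟨0, 0, Submodule.zero_mem _, by simp⟩
  | add u u' _ _ hu hu' =>
    obtain ⟨t, w, hw, rfl⟩ := hu
    obtain ⟨t', w', hw', rfl⟩ := hu'
    exact ⟨t + t', w + w', Submodule.add_mem _ hw hw', by rw [mulVec_add, add_smul]; abel⟩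
  | smul c u _ hu =>
    obtain ⟨t, w, hw, rfl⟩ := hu
    exact ⟨c * t, c • w, Submodule.smul_mem _ c hw, by rw [mulVec_smul, smul_add, smul_smul]⟩

lemma krylov_succ_eq_sup_of_notMem {k : ℕ} {v : Fin n → ℝ} (hv : v ∈ krylov A r0 (k + 1))
    (hvk : v ∉ krylov A r0 k) : krylov A r0 (k + 1) = krylov A r0 k ⊔ ℝ ∙ v := by
  rw [krylov_succ] at hv ⊢
  exact (Submodule.sup_span_singleton_eq_of_notMem hv hvk).symm

end Krylov

namespace IsGMRES

variable {A : Matrix (Fin n) (Fin n) ℝ} {b x0 : Fin n → ℝ} {xG : ℕ → Fin n → ℝ}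

local notation "𝒦" => krylov A (residv A b x0)

lemma sub_mem_krylov (hG : IsGMRES A b x0 xG) {i k : ℕ} (h : i ≤ k) : xG i - x0 ∈ 𝒦 k :=
  krylov_mono A _ h (hG.2 i).1

lemma norm2_residv_le (hG : IsGMRES A b x0 xG) {k : ℕ} {y : Fin n → ℝ} (hy : y - x0 ∈ 𝒦 k) :
    norm2 (residv A b (xG k)) ≤ norm2 (residv A b y) :=
  (hG.2 k).2 y hy

lemma residv_dotProduct_mulVec_eq_zero (hG : IsGMRES A b x0 xG) {k : ℕ} {w : Fin n → ℝ}
    (hw : w ∈ 𝒦 k) : residv A b (xG k) ⬝ᵥ A *ᵥ w = 0 := by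
  refine dotProduct_eq_zero_of_forall_dotProduct_self_le fun t => ?_
  have hmem : xG k + t • w - x0 ∈ 𝒦 k := by
    rw [add_sub_right_comm]
    exact Submodule.add_mem _ (hG.sub_mem_krylov le_rfl) (Submodule.smul_mem _ t hw)
  have := norm2_le_norm2_iff.1 (hG.norm2_residv_le hmem)
  rwa [residv_add, mulVec_smul] at this

lemma residv_mem_krylov (hG : IsGMRES A b x0 xG) (k : ℕ) : residv A b (xG k) ∈ 𝒦 (k + 1) := by
  have h : residv A b (xG k) = residv A b x0 + A *ᵥ (xG k - x0) := by
    rw [← residv_add, add_sub_cancel]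
  rw [h]
  exact Submodule.add_mem _ (self_mem_krylov_succ A _ k)
    (mulVec_mem_krylov_succ (hG.sub_mem_krylov le_rfl))

lemma qmap_sub_mem_krylov (hG : IsGMRES A b x0 xG) (k : ℕ) :
    qmap A b (xG k) - x0 ∈ 𝒦 (k + 1) := by
  rw [qmap_eq_sub_residv, sub_right_comm]
  exact Submodule.sub_mem _ (hG.sub_mem_krylov k.le_succ) (hG.residv_mem_krylov k)

/-- By orthogonality, `‖r(y)‖² = ‖r_k‖² + ‖A (y - x_k)‖²`. -/
lemma eq_of_norm2_residv_le (hG : IsGMRES A b x0 xG) (hA : IsUnit A.det) {k : ℕ}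
    {y : Fin n → ℝ} (hy : y - x0 ∈ 𝒦 k) (hle : norm2 (residv A b y) ≤ norm2 (residv A b (xG k))) :
    y = xG k := by
  set u := A *ᵥ (y - xG k)
  have hyk : y - xG k ∈ 𝒦 k := by
    rw [← sub_sub_sub_cancel_right y (xG k) x0]
    exact Submodule.sub_mem _ hy (hG.sub_mem_krylov le_rfl)
  have horth := hG.residv_dotProduct_mulVec_eq_zero hyk
  have hres : residv A b y = residv A b (xG k) + u := by rw [← residv_add, add_sub_cancel]
  have hle' := norm2_le_norm2_iff.1 hle
  rw [hres, add_dotProduct, dotProduct_add, dotProduct_add, horth, dotProduct_comm u,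
    horth] at hle'
  have hu : u = 0 := dotProduct_self_eq_zero.1 (by linarith [dotProduct_self_nonneg u])
  have hinj := mulVec_injective_iff_isUnit.2 ((isUnit_iff_isUnit_det A).2 hA)
  exact sub_eq_zero.1 (hinj (hu.trans (mulVec_zero A).symm))

lemma sub_notMem_krylov (hG : IsGMRES A b x0 xG) {k : ℕ}
    (hlt : norm2 (residv A b (xG (k + 1))) < norm2 (residv A b (xG k))) :
    xG (k + 1) - xG k ∉ 𝒦 k := by
  intro hd
  have hmem : xG (k + 1) - x0 ∈ 𝒦 k := by
    rw [← sub_add_sub_cancel _ (xG k)]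
    exact Submodule.add_mem _ hd (hG.sub_mem_krylov le_rfl)
  exact (hG.norm2_residv_le hmem).not_gt hlt

/-- If `r_{k+1} = t r_0 + A w` with `w ∈ K_k`, pairing with `r_{k+1}` gives `t = 1`, so
`r_{k+1}` is the residual of `x0 + w ∈ x0 + K_k` and cannot beat `r_k`. -/
lemma residv_notMem_krylov_succ (hG : IsGMRES A b x0 xG) {k : ℕ}
    (hne : residv A b (xG (k + 1)) ≠ 0)
    (hlt : norm2 (residv A b (xG (k + 1))) < norm2 (residv A b (xG k))) :
    residv A b (xG (k + 1)) ∉ 𝒦 (k + 1) := by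
  set r := residv A b (xG (k + 1))
  intro hr
  obtain ⟨t, w, hw, hrw⟩ := exists_smul_add_mulVec_of_mem_krylov_succ hr
  have hw' : r ⬝ᵥ A *ᵥ w = 0 := hG.residv_dotProduct_mulVec_eq_zero (krylov_mono A _ k.le_succ hw)
  have hr0 : r ⬝ᵥ residv A b x0 = r ⬝ᵥ r := by
    have := hG.residv_dotProduct_mulVec_eq_zero (hG.sub_mem_krylov (le_refl (k + 1)))
    rw [← residv_sub_residv, dotProduct_sub] at this
    linarith
  have ht : t = 1 := by
    have hrr : r ⬝ᵥ r = t * (r ⬝ᵥ r) :=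
      calc r ⬝ᵥ r = r ⬝ᵥ (t • residv A b x0 + A *ᵥ w) := congrArg _ hrw
        _ = t * (r ⬝ᵥ r) := by rw [dotProduct_add, dotProduct_smul, hw', hr0, smul_eq_mul, add_zero]
    have hpos : r ⬝ᵥ r ≠ 0 := fun h => hne (dotProduct_self_eq_zero.1 h)
    exact (mul_eq_right₀ hpos).1 hrr.symm
  have hmem : x0 + w - x0 ∈ 𝒦 k := by rwa [add_sub_cancel_left]
  have := hG.norm2_residv_le hmem
  rw [residv_add, ← one_smul ℝ (residv A b x0), ← ht, ← hrw] at this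
  exact this.not_gt hlt

lemma krylov_le_of_qmap_sub_mem (hG : IsGMRES A b x0 xG) {j : ℕ}
    (hr : ∀ i < j, residv A b (xG i) ∉ 𝒦 i) {S : Submodule ℝ (Fin n → ℝ)}
    (hS : ∀ i < j, qmap A b (xG i) - x0 ∈ S) : 𝒦 j ≤ S := by
  induction j with
  | zero => rw [krylov_zero]; exact bot_le
  | succ j ih =>
    have hKj : 𝒦 j ≤ S := ih (fun i hi => hr i (by omega)) (fun i hi => hS i (by omega))
    rw [krylov_succ_eq_sup_of_notMem (hG.residv_mem_krylov j) (hr j j.lt_succ_self)]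
    refine sup_le hKj (Submodule.span_singleton_le_iff_mem _ _ |>.2 ?_)
    have h : residv A b (xG j) = (xG j - x0) - (qmap A b (xG j) - x0) := by
      rw [qmap_eq_sub_residv]; abel
    rw [h]
    exact Submodule.sub_mem _ (hKj (hG.sub_mem_krylov le_rfl)) (hS j j.lt_succ_self)

end IsGMRES

lemma exists_transpose_eq_smul_one_add_smul {A : Matrix (Fin n) (Fin n) ℝ}
    (hsym : A.IsSymm ∨ ∃ (α : ℝ) (S : Matrix (Fin n) (Fin n) ℝ), Sᵀ = -S ∧ A = α • 1 + S) :
    ∃ c₁ c₂ : ℝ, Aᵀ = c₁ • 1 + c₂ • A := by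
  rcases hsym with hA | ⟨α, S, hS, rfl⟩
  · exact ⟨0, 1, by rw [hA.eq]; simp⟩
  · refine ⟨2 * α, -1, ?_⟩
    rw [transpose_add, transpose_smul, transpose_one, hS]
    module

namespace IsGMRES

variable {A : Matrix (Fin n) (Fin n) ℝ} {b x0 : Fin n → ℝ} {xG : ℕ → Fin n → ℝ}

local notation "𝒦" => krylov A (residv A b x0)

/-- Since `Aᵀ ∈ span {1, A}`, `Aᵀ A w ∈ A K_{k+1}` for `w ∈ K_k`. -/
lemma mulVec_residv_dotProduct_mulVec_eq_zero (hG : IsGMRES A b x0 xG) {c₁ c₂ : ℝ}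
    (hAt : Aᵀ = c₁ • 1 + c₂ • A) {k : ℕ} {w : Fin n → ℝ} (hw : w ∈ 𝒦 k) :
    A *ᵥ residv A b (xG (k + 1)) ⬝ᵥ A *ᵥ w = 0 := by
  have hAw : A *ᵥ w ∈ 𝒦 (k + 1) := mulVec_mem_krylov_succ hw
  rw [dotProduct_comm, ← dotProduct_transpose_mulVec, hAt, add_mulVec, smul_mulVec,
    smul_mulVec, one_mulVec, dotProduct_add, dotProduct_smul, dotProduct_smul,
    hG.residv_dotProduct_mulVec_eq_zero (krylov_mono A _ k.le_succ hw),
    hG.residv_dotProduct_mulVec_eq_zero hAw, smul_zero, smul_zero, add_zero]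

lemma krylov_add_two_eq (hG : IsGMRES A b x0 xG) {k : ℕ}
    (hr : residv A b (xG (k + 1)) ∉ 𝒦 (k + 1)) (hd : xG (k + 1) - xG k ∉ 𝒦 k) :
    𝒦 (k + 2) = 𝒦 k ⊔ Submodule.span ℝ {residv A b (xG (k + 1)), xG (k + 1) - xG k} := by
  have hdk : xG (k + 1) - xG k ∈ 𝒦 (k + 1) := by
    rw [← sub_sub_sub_cancel_right _ _ x0]
    exact Submodule.sub_mem _ (hG.sub_mem_krylov le_rfl) (hG.sub_mem_krylov k.le_succ)
  rw [krylov_succ_eq_sup_of_notMem (hG.residv_mem_krylov _) hr,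
    krylov_succ_eq_sup_of_notMem hdk hd, Submodule.span_insert, sup_assoc, sup_comm (ℝ ∙ _)]

lemma sub_mem_span_pair (hG : IsGMRES A b x0 xG) (hA : IsUnit A.det) {c₁ c₂ : ℝ}
    (hAt : Aᵀ = c₁ • 1 + c₂ • A) {k : ℕ}
    (hr : residv A b (xG (k + 1)) ∉ 𝒦 (k + 1)) (hd : xG (k + 1) - xG k ∉ 𝒦 k) :
    xG (k + 2) - xG (k + 1) ∈
      Submodule.span ℝ {residv A b (xG (k + 1)), xG (k + 1) - xG k} := by
  set P := Submodule.span ℝ {residv A b (xG (k + 1)), xG (k + 1) - xG k}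
  have he : xG (k + 2) - xG (k + 1) ∈ 𝒦 k ⊔ P := by
    rw [← hG.krylov_add_two_eq hr hd, ← sub_sub_sub_cancel_right _ _ x0]
    exact Submodule.sub_mem _ (hG.sub_mem_krylov le_rfl) (hG.sub_mem_krylov (by omega))
  obtain ⟨w, hw, p, hp, hwp⟩ := Submodule.mem_sup.1 he
  have hAp : A *ᵥ p ⬝ᵥ A *ᵥ w = 0 := by
    obtain ⟨s, t, rfl⟩ := Submodule.mem_span_pair.1 hp
    have hd : A *ᵥ (xG (k + 1) - xG k) ⬝ᵥ A *ᵥ w = 0 := by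
      rw [← residv_sub_residv, sub_dotProduct,
        hG.residv_dotProduct_mulVec_eq_zero (krylov_mono A _ k.le_succ hw),
        hG.residv_dotProduct_mulVec_eq_zero hw, sub_zero]
    rw [mulVec_add, mulVec_smul, mulVec_smul, add_dotProduct, smul_dotProduct, smul_dotProduct,
      hG.mulVec_residv_dotProduct_mulVec_eq_zero hAt hw, hd, smul_zero, smul_zero, add_zero]
  have hres : residv A b (xG (k + 2)) = residv A b (xG (k + 1)) + A *ᵥ w + A *ᵥ p := by
    rw [add_assoc, ← mulVec_add, hwp, ← residv_add, add_sub_cancel]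
  have hAw : A *ᵥ w ⬝ᵥ A *ᵥ w = 0 := by
    have h2 := hG.residv_dotProduct_mulVec_eq_zero (krylov_mono A _ (by omega : k ≤ k + 2) hw)
    rw [hres, add_dotProduct, add_dotProduct, hAp,
      hG.residv_dotProduct_mulVec_eq_zero (krylov_mono A _ k.le_succ hw)] at h2
    linarith
  have hinj := mulVec_injective_iff_isUnit.2 ((isUnit_iff_isUnit_det A).2 hA)
  have hw0 : w = 0 := hinj ((dotProduct_self_eq_zero.1 hAw).trans (mulVec_zero A).symm)
  rw [← hwp, hw0, zero_add]
  exact hp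

end IsGMRES

section NGMRES

variable {A : Matrix (Fin n) (Fin n) ℝ} {b : Fin n → ℝ} {x : ℕ → Fin n → ℝ}

lemma ngmresUpdate_sub_mem {x0 : Fin n → ℝ} {W : Submodule ℝ (Fin n → ℝ)} {k : ℕ}
    (hq : qmap A b (x k) - x0 ∈ W) (hx : ∀ i ≤ k, x i - x0 ∈ W) (β : ℕ → ℝ) (mk : ℕ) :
    ngmresUpdate A b x β k mk - x0 ∈ W := by
  rw [ngmresUpdate, add_sub_right_comm]
  refine Submodule.add_mem _ hq (Submodule.sum_mem _ fun i _ => Submodule.smul_mem _ _ ?_)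
  rw [← sub_sub_sub_cancel_right _ _ x0]
  exact Submodule.sub_mem _ hq (hx _ (Nat.sub_le k i))

lemma exists_ngmresUpdate_eq_add_smul (k mk : ℕ) (t : ℝ) :
    ∃ β, ngmresUpdate A b x β k mk = x k + t • residv A b (x k) := by
  refine ⟨fun i => if i = 0 then -1 - t else 0, ?_⟩
  rw [ngmresUpdate, Finset.sum_range_succ', Finset.sum_eq_zero fun i _ => by simp,
    qmap_eq_sub_residv]
  simp only [if_pos, zero_add, Nat.sub_zero]
  module

lemma exists_ngmresUpdate_succ_eq_add {k mk : ℕ} (hmk : 1 ≤ mk) {p : Fin n → ℝ}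
    (hp : p ∈ Submodule.span ℝ {residv A b (x (k + 1)), x (k + 1) - x k}) :
    ∃ β, ngmresUpdate A b x β (k + 1) mk = x (k + 1) + p := by
  obtain ⟨s, t, rfl⟩ := Submodule.mem_span_pair.1 hp
  obtain ⟨mk, rfl⟩ := Nat.exists_eq_add_of_le' hmk
  refine ⟨fun i => if i = 0 then -1 - s - t else if i = 1 then t else 0, ?_⟩
  rw [ngmresUpdate, Finset.sum_range_succ', Finset.sum_range_succ',
    Finset.sum_eq_zero fun i _ => by simp, qmap_eq_sub_residv]
  simp only [zero_add, Nat.sub_zero, add_tsub_cancel_right, one_ne_zero, if_true, if_false]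
  module

variable {x0 : Fin n → ℝ} {xG : ℕ → Fin n → ℝ}

lemma IsNGMRES.eq_succ_of_exists_ngmresUpdate_eq {mk : ℕ → ℕ} {β : ℕ → ℕ → ℝ}
    (hx : IsNGMRES A b x0 mk x β) (hG : IsGMRES A b x0 xG) (hA : IsUnit A.det) {k : ℕ}
    (hprev : ∀ i ≤ k, x i = xG i) (hreach : ∃ β', ngmresUpdate A b x β' k (mk k) = xG (k + 1)) :
    x (k + 1) = xG (k + 1) := by
  obtain ⟨β', hβ'⟩ := hreach
  refine hG.eq_of_norm2_residv_le hA ?_ (hβ' ▸ (hx.2 k).2 β')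
  rw [(hx.2 k).1]
  refine ngmresUpdate_sub_mem ?_ (fun i hi => ?_) _ _
  · rw [hprev k le_rfl]
    exact hG.qmap_sub_mem_krylov k
  · rw [hprev i hi]
    exact hG.sub_mem_krylov (hi.trans k.le_succ)

lemma IsNGMRES.eq_of_isGMRES {m : ℕ} {β : ℕ → ℕ → ℝ}
    (hx : IsNGMRES A b x0 (fun k => min k m) x β) (hG : IsGMRES A b x0 xG) (hA : IsUnit A.det)
    {c₁ c₂ : ℝ} (hAt : Aᵀ = c₁ • 1 + c₂ • A) (hm : 1 ≤ m) {k0 : ℕ}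
    (hr : ∀ k < k0, residv A b (xG k) ∉ krylov A (residv A b x0) k)
    (hd : ∀ k, k + 1 < k0 → xG (k + 1) - xG k ∉ krylov A (residv A b x0) k) :
    ∀ j ≤ k0, x j = xG j := by
  suffices h : ∀ j ≤ k0, ∀ i ≤ j, x i = xG i from fun j hj => h j hj j le_rfl
  intro j
  induction j with
  | zero => intro _ i hi; rw [Nat.le_zero.1 hi, hx.1, hG.1]
  | succ j ih =>
    intro hj i hi
    have hprev := ih (by omega)
    rcases Nat.lt_or_eq_of_le hi with hi | rfl
    · exact hprev i (by omega)
    refine hx.eq_succ_of_exists_ngmresUpdate_eq hG hA hprev ?_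
    cases j with
    | zero =>
      obtain ⟨t, ht⟩ := Submodule.mem_span_singleton.1
        (krylov_one A _ ▸ hG.sub_mem_krylov (le_refl 1))
      obtain ⟨β', hβ'⟩ := exists_ngmresUpdate_eq_add_smul (A := A) (b := b) (x := x) 0 (min 0 m) t
      refine ⟨β', ?_⟩
      rw [hβ', hx.1, ht, add_sub_cancel]
    | succ k =>
      have hp := hG.sub_mem_span_pair hA hAt (hr (k + 1) (by omega)) (hd k (by omega))
      rw [← hprev (k + 1) (by omega), ← hprev k (by omega)] at hp
      obtain ⟨β', hβ'⟩ :=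
        exists_ngmresUpdate_succ_eq_add (mk := min (k + 1) m) (le_min (by omega) hm) hp
      refine ⟨β', ?_⟩
      rw [hβ', hprev (k + 1) le_rfl, add_sub_cancel]

end NGMRES

section AndersonAcceleration

def aaPoint (x : ℕ → Fin n → ℝ) (γ : ℕ → ℝ) (k mk : ℕ) : Fin n → ℝ :=
  x k + ∑ i ∈ Finset.Icc 1 mk, γ i • (x k - x (k - i))

variable {A : Matrix (Fin n) (Fin n) ℝ} {b : Fin n → ℝ} {x : ℕ → Fin n → ℝ}

lemma aaUpdate_eq_qmap_aaPoint (γ : ℕ → ℝ) (k mk : ℕ) :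
    aaUpdate A b x γ k mk = qmap A b (aaPoint x γ k mk) := by
  simp only [aaUpdate, aaPoint, qmap_add, mulVec_sum, mulVec_smul, qmap_sub_qmap]

lemma aaObj_eq_residv_aaPoint (γ : ℕ → ℝ) (k mk : ℕ) :
    aaObj A b x γ k mk = residv A b (aaPoint x γ k mk) := by
  simp only [aaObj, aaPoint, residv_add, mulVec_sum, mulVec_smul, residv_sub_residv]

lemma aaPoint_sub_mem {x0 : Fin n → ℝ} {W : Submodule ℝ (Fin n → ℝ)} {k : ℕ}
    (hx : ∀ i ≤ k, x i - x0 ∈ W) (γ : ℕ → ℝ) (mk : ℕ) : aaPoint x γ k mk - x0 ∈ W := by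
  rw [aaPoint, add_sub_right_comm]
  refine Submodule.add_mem _ (hx k le_rfl)
    (Submodule.sum_mem _ fun i _ => Submodule.smul_mem _ _ ?_)
  rw [← sub_sub_sub_cancel_right _ _ x0]
  exact Submodule.sub_mem _ (hx k le_rfl) (hx _ (Nat.sub_le k i))

lemma exists_aaPoint_eq_add {k mk : ℕ} {v : Fin n → ℝ}
    (hv : v ∈ Submodule.span ℝ ((fun i => x k - x (k - i)) '' ↑(Finset.Icc 1 mk))) :
    ∃ γ, aaPoint x γ k mk = x k + v := by
  classical
  obtain ⟨c, hc⟩ := (Fintype.mem_span_image_iff_exists_fun ℝ).1 hv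
  refine ⟨fun i => if h : i ∈ Finset.Icc 1 mk then c ⟨i, h⟩ else 0, ?_⟩
  rw [aaPoint, ← hc, ← Finset.sum_coe_sort]
  simp only [Finset.coe_mem, dif_pos]
  rfl

lemma sub_mem_span_image_sub {k l : ℕ} (hl : l ≤ k) :
    x k - x l ∈ Submodule.span ℝ ((fun i => x k - x (k - i)) '' ↑(Finset.Icc 1 k)) := by
  rcases Nat.lt_or_eq_of_le hl with hl | rfl
  · refine Submodule.subset_span ⟨k - l, by simp; omega, ?_⟩
    simp only [Nat.sub_sub_self hl.le]
  · rw [sub_self]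
    exact Submodule.zero_mem _

variable {x0 : Fin n → ℝ} {xG : ℕ → Fin n → ℝ}

lemma IsAA.eq_qmap_of_isGMRES {γ : ℕ → ℕ → ℝ} (hx : IsAA A b x0 (fun k => k) x γ)
    (hG : IsGMRES A b x0 xG) (hA : IsUnit A.det) {k0 : ℕ}
    (hr : ∀ k < k0, residv A b (xG k) ∉ krylov A (residv A b x0) k) :
    ∀ j ≤ k0, x (j + 1) = qmap A b (xG j) := by
  intro j
  induction j using Nat.strong_induction_on with
  | _ j ih =>
  intro hj
  have hmem : ∀ i ≤ j, x i - x0 ∈ krylov A (residv A b x0) j := by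
    rintro (_ | i) hi
    · rw [hx.1, sub_self]
      exact Submodule.zero_mem _
    · rw [ih i (by omega) (by omega)]
      exact krylov_mono A _ hi (hG.qmap_sub_mem_krylov i)
  set S := Submodule.span ℝ ((fun i => x j - x (j - i)) '' ↑(Finset.Icc 1 j))
  have hx0S : x j - x0 ∈ S := hx.1 ▸ sub_mem_span_image_sub (Nat.zero_le j)
  have hK : krylov A (residv A b x0) j ≤ S := by
    refine hG.krylov_le_of_qmap_sub_mem (fun i hi => hr i (by omega)) fun i hi => ?_
    rw [← ih i hi (by omega), ← sub_sub_sub_cancel_left _ _ (x j)]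
    exact Submodule.sub_mem _ hx0S (sub_mem_span_image_sub hi)
  obtain ⟨g, hg⟩ : ∃ g, aaPoint x g j j = x j + (xG j - x j) := by
    refine exists_aaPoint_eq_add ?_
    rw [← sub_sub_sub_cancel_right _ _ x0]
    exact Submodule.sub_mem _ (hK (hG.sub_mem_krylov le_rfl)) hx0S
  have hpt : aaPoint x (γ j) j j = xG j := by
    refine hG.eq_of_norm2_residv_le hA (aaPoint_sub_mem hmem _ _) ?_
    have := (hx.2 j).2 g
    rwa [aaObj_eq_residv_aaPoint, aaObj_eq_residv_aaPoint, hg, add_sub_cancel] at this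
  rw [(hx.2 j).1, aaUpdate_eq_qmap_aaPoint, hpt]

end AndersonAcceleration

end GMRESTheory

theorem stmt13_general (n : ℕ) (A : Matrix (Fin n) (Fin n) ℝ) (b x0 : Fin n → ℝ)
    (hA : IsUnit A.det)
    (hsym : A.IsSymm ∨ ∃ (α : ℝ) (S : Matrix (Fin n) (Fin n) ℝ), Sᵀ = -S ∧ A = α • 1 + S)
    (xNG : ℕ → ℕ → Fin n → ℝ) (β : ℕ → ℕ → ℕ → ℝ)
    (xA xG : ℕ → Fin n → ℝ) (γ : ℕ → ℕ → ℝ)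
    (hNG : ∀ m, 1 ≤ m → IsNGMRES A b x0 (fun k => min k m) (xNG m) (β m))
    (hAA : IsAA A b x0 (fun k => k) xA γ)
    (hG : IsGMRES A b x0 xG)
    (k0 : ℕ)
    (hrk0 : residv A b (xG (k0 - 1)) ≠ 0)
    (hdec : ∀ k, 0 < k → k < k0 →
      norm2 (residv A b (xG k)) < norm2 (residv A b (xG (k - 1)))) :
    ∀ m, 1 ≤ m → ∀ j ≤ k0,
      xNG m j = xG j ∧
      xA (j + 1) = qmap A b (xNG m j) ∧
      qmap A b (xNG m j) = xNG m j - residv A b (xNG m j) := by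
  obtain ⟨c₁, c₂, hAt⟩ := exists_transpose_eq_smul_one_add_smul hsym
  have hlt : ∀ k, k + 1 < k0 → norm2 (residv A b (xG (k + 1))) < norm2 (residv A b (xG k)) :=
    fun k hk => hdec (k + 1) k.succ_pos hk
  have hne : ∀ k < k0, residv A b (xG k) ≠ 0 := fun k hk => by
    rcases Nat.lt_or_eq_of_le (Nat.le_sub_one_of_lt hk) with hk' | rfl
    · exact ne_zero_of_norm2_lt (hlt k (by omega))
    · exact hrk0
  have hr : ∀ k < k0, residv A b (xG k) ∉ krylov A (residv A b x0) k := by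
    rintro (_ | k) hk
    · rw [krylov_zero, Submodule.mem_bot]
      exact hne 0 hk
    · exact hG.residv_notMem_krylov_succ (hne _ hk) (hlt k hk)
  intro m hm j hj
  have hNGj := (hNG m hm).eq_of_isGMRES hG hA hAt hm hr
    (fun k hk => hG.sub_notMem_krylov (hlt k hk)) j hj
  rw [hNGj]
  exact ⟨rfl, hAA.eq_qmap_of_isGMRES hG hA hr j hj, qmap_eq_sub_residv A b _⟩

/-- for invertible symmetric or shifted skew-symmetric `A`, under strict
decrease of the GMRES residual norms up to `k0`, NGMRES(m) with any window `m ≥ 1`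
reproduces the GMRES iterates up to `k0`, and full AA satisfies
`x_{j+1}^A = q(x_j^{NG(m)}) = x_j^{NG(m)} - r_j^{NG(m)}`. -/
theorem stmt13 (n : ℕ) (A : Matrix (Fin n) (Fin n) ℝ) (b x0 xstar : Fin n → ℝ)
    (hA : IsUnit A.det)
    (hsym : A.IsSymm ∨ ∃ (α : ℝ) (S : Matrix (Fin n) (Fin n) ℝ), Sᵀ = -S ∧ A = α • 1 + S)
    (xNG : ℕ → ℕ → Fin n → ℝ) (β : ℕ → ℕ → ℕ → ℝ)
    (xA xG : ℕ → Fin n → ℝ) (γ : ℕ → ℕ → ℝ)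
    (hNG : ∀ m, 1 ≤ m → IsNGMRES A b x0 (fun k => min k m) (xNG m) (β m))
    (hAA : IsAA A b x0 (fun k => k) xA γ)
    (hG : IsGMRES A b x0 xG)
    (hstar : A.mulVec xstar = b) (hx0 : x0 ≠ xstar)
    (k0 : ℕ) (hk0 : 0 < k0)
    (hrk0 : residv A b (xG (k0 - 1)) ≠ 0)
    (hdec : ∀ k, 0 < k → k < k0 →
      norm2 (residv A b (xG k)) < norm2 (residv A b (xG (k - 1)))) :
    ∀ m, 1 ≤ m → ∀ j ≤ k0,
      xNG m j = xG j ∧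
      xA (j + 1) = qmap A b (xNG m j) ∧
      qmap A b (xNG m j) = xNG m j - residv A b (xNG m j) :=
  stmt13_general n A b x0 hA hsym xNG β xA xG γ hNG hAA hG k0 hrk0 hdec

end
end

section
/- Let A ∈ R^{n×n} be a symmetric positive definite or symmetric negative definite matrix. Then NGMRES with any window size m converges for any initial guess x_0, and the residuals satisfy ‖r_{k+1}‖₂ ≤ (|λ_max(A) − λ_min(A)| / |λ_max(A) + λ_min(A)|) ‖r_k‖₂ for all k. -/
open Matrix Filter

noncomputable section

/-! The optimal NGMRES coefficients do at least as well as `β = (s - 1, 0, …, 0)`, which turns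
the step into the Richardson step `x_k - s r_k`, with residual `(I - s A) r_k`. Expanding in an
orthonormal eigenbasis of the symmetric `A`, `‖(I - s A) v‖ ≤ max_i |1 - s λ_i| ‖v‖`, and for
`s = 2 / (λ_max + λ_min)` the maximum is `|λ_max - λ_min| / |λ_max + λ_min|`. Definiteness puts
`λ_max` and `λ_min` on the same side of `0`, so this factor is `< 1`. -/

theorem OrthonormalBasis.norm_map_le_of_apply_eq_smul {ι 𝕜 E : Type*} [Fintype ι] [RCLike 𝕜]
    [NormedAddCommGroup E] [InnerProductSpace 𝕜 E] (b : OrthonormalBasis ι 𝕜 E)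
    (T : E →ₗ[𝕜] E) {μ : ι → 𝕜} (hT : ∀ i, T (b i) = μ i • b i) {c : ℝ} (hc : 0 ≤ c)
    (hμ : ∀ i, ‖μ i‖ ≤ c) (v : E) : ‖T v‖ ≤ c * ‖v‖ := by
  have hTv : T v = b.repr.symm (WithLp.toLp 2 fun i => μ i * b.repr v i) := by
    rw [← b.sum_repr_symm]
    nth_rewrite 1 [← b.sum_repr v]
    simp [map_sum, hT, smul_smul, mul_comm]
  have hsq : ‖T v‖ ^ 2 ≤ (c * ‖v‖) ^ 2 := by
    rw [hTv, LinearIsometryEquiv.norm_map, mul_pow, ← b.repr.norm_map v,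
      EuclideanSpace.norm_sq_eq, EuclideanSpace.norm_sq_eq, Finset.mul_sum]
    refine Finset.sum_le_sum fun i _ => ?_
    rw [PiLp.toLp_apply, norm_mul, mul_pow]
    gcongr
    exact hμ i
  exact (pow_le_pow_iff_left₀ (norm_nonneg _) (by positivity) two_ne_zero).mp hsq

theorem norm2_eq_norm_toLp {n : ℕ} (v : Fin n → ℝ) :
    norm2 v = ‖(WithLp.toLp 2 v : EuclideanSpace ℝ (Fin n))‖ := by
  simp [norm2, EuclideanSpace.norm_eq, dotProduct, ← sq]

theorem Matrix.IsHermitian.norm2_one_sub_smul_mulVec_le {n : ℕ}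
    {A : Matrix (Fin n) (Fin n) ℝ} (hA : A.IsHermitian) {s c : ℝ} (hc : 0 ≤ c)
    (hμ : ∀ i, |1 - s * hA.eigenvalues i| ≤ c) (v : Fin n → ℝ) :
    norm2 ((1 - s • A) *ᵥ v) ≤ c * norm2 v := by
  rw [norm2_eq_norm_toLp, norm2_eq_norm_toLp]
  refine hA.eigenvectorBasis.norm_map_le_of_apply_eq_smul (toLpLin 2 2 (1 - s • A))
    (μ := fun i => 1 - s * hA.eigenvalues i) (fun i => ?_) hc hμ (WithLp.toLp 2 v)
  ext j
  simp [toLpLin_apply, hA.mulVec_eigenvectorBasis, sub_mul, mul_assoc]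

theorem abs_one_sub_two_div_mul_le {l t L : ℝ} (hl : l ≤ t) (hL : t ≤ L) (hLl : L + l ≠ 0) :
    |1 - 2 / (L + l) * t| ≤ |L - l| / |L + l| := by
  have h : 1 - 2 / (L + l) * t = (L + l - 2 * t) / (L + l) := by field_simp
  rw [h, abs_div]
  refine div_le_div_of_nonneg_right ?_ (abs_nonneg _)
  exact (abs_le.mpr ⟨by linarith, by linarith⟩ : |L + l - 2 * t| ≤ L - l).trans (le_abs_self _)

theorem abs_sub_lt_abs_add_of_mul_pos {a b : ℝ} (h : 0 < a * b) : |a - b| < |a + b| :=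
  sq_lt_sq.mp (by nlinarith)

section Spectrum

variable {ι : Type*} [Fintype ι] [DecidableEq ι] {A : Matrix ι ι ℝ}

theorem Matrix.PosDef.pos_of_mem_spectrum (hA : A.PosDef) {μ : ℝ} (hμ : μ ∈ spectrum ℝ A) :
    0 < μ := by
  obtain ⟨i, rfl⟩ := hA.isHermitian.spectrum_real_eq_range_eigenvalues ▸ hμ
  exact hA.eigenvalues_pos i

theorem mul_pos_of_mem_spectrum_of_definite (hdef : A.PosDef ∨ (-A).PosDef) {μ ν : ℝ}
    (hμ : μ ∈ spectrum ℝ A) (hν : ν ∈ spectrum ℝ A) : 0 < μ * ν := by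
  rcases hdef with hpos | hneg
  · exact mul_pos (hpos.pos_of_mem_spectrum hμ) (hpos.pos_of_mem_spectrum hν)
  · have hμ' := hneg.pos_of_mem_spectrum (spectrum.neg_eq (R := ℝ) A ▸ Set.neg_mem_neg.mpr hμ)
    have hν' := hneg.pos_of_mem_spectrum (spectrum.neg_eq (R := ℝ) A ▸ Set.neg_mem_neg.mpr hν)
    nlinarith

theorem Matrix.IsHermitian.finite_spectrum_real (hA : A.IsHermitian) :
    (spectrum ℝ A).Finite :=
  hA.spectrum_real_eq_range_eigenvalues ▸ Set.finite_range _

theorem Matrix.IsHermitian.eigenvalues_mem_Icc (hA : A.IsHermitian) (i : ι) :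
    hA.eigenvalues i ∈ Set.Icc (sInf (spectrum ℝ A)) (sSup (spectrum ℝ A)) :=
  ⟨csInf_le hA.finite_spectrum_real.bddBelow (hA.eigenvalues_mem_spectrum_real i),
    le_csSup hA.finite_spectrum_real.bddAbove (hA.eigenvalues_mem_spectrum_real i)⟩

theorem Matrix.IsHermitian.abs_sSup_sub_sInf_spectrum_lt [Nonempty ι] (hA : A.IsHermitian)
    (hdef : A.PosDef ∨ (-A).PosDef) :
    |sSup (spectrum ℝ A) - sInf (spectrum ℝ A)| < |sSup (spectrum ℝ A) + sInf (spectrum ℝ A)| := by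
  have hne : (spectrum ℝ A).Nonempty :=
    ⟨_, hA.eigenvalues_mem_spectrum_real (Classical.arbitrary ι)⟩
  exact abs_sub_lt_abs_add_of_mul_pos <| mul_pos_of_mem_spectrum_of_definite hdef
    (hne.csSup_mem hA.finite_spectrum_real) (hne.csInf_mem hA.finite_spectrum_real)

theorem Matrix.IsHermitian.abs_one_sub_mul_eigenvalues_le (hA : A.IsHermitian)
    (hdef : A.PosDef ∨ (-A).PosDef) (i : ι) :
    |1 - 2 / (sSup (spectrum ℝ A) + sInf (spectrum ℝ A)) * hA.eigenvalues i|
      ≤ |sSup (spectrum ℝ A) - sInf (spectrum ℝ A)|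
        / |sSup (spectrum ℝ A) + sInf (spectrum ℝ A)| := by
  have : Nonempty ι := ⟨i⟩
  have hsum := (abs_nonneg _).trans_lt (hA.abs_sSup_sub_sInf_spectrum_lt hdef)
  exact abs_one_sub_two_div_mul_le (hA.eigenvalues_mem_Icc i).1 (hA.eigenvalues_mem_Icc i).2
    (abs_pos.mp hsum)

end Spectrum

theorem residv_ngmresUpdate_single_zero {n : ℕ} (A : Matrix (Fin n) (Fin n) ℝ)
    (b : Fin n → ℝ) (x : ℕ → Fin n → ℝ) (s : ℝ) (k mk : ℕ) :
    residv A b (ngmresUpdate A b x (Pi.single 0 (s - 1) : ℕ → ℝ) k mk)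
      = (1 - s • A) *ᵥ residv A b (x k) := by
  have hsum : ∑ i ∈ Finset.range (mk + 1),
      (Pi.single 0 (s - 1) : ℕ → ℝ) i • (qmap A b (x k) - x (k - i))
        = (s - 1) • (qmap A b (x k) - x k) := by
    rw [Finset.sum_eq_single_of_mem 0 (by simp) fun i _ hi => by simp [hi]]
    simp
  rw [ngmresUpdate, hsum]
  simp only [residv, qmap, mulVec_add, mulVec_smul, mulVec_sub, sub_mulVec, one_mulVec,
    smul_mulVec]
  module

theorem IsNGMRES.norm2_residv_succ_le {n : ℕ} {A : Matrix (Fin n) (Fin n) ℝ}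
    {b x0 : Fin n → ℝ} {mk : ℕ → ℕ} {x : ℕ → Fin n → ℝ} {β : ℕ → ℕ → ℝ}
    (hNG : IsNGMRES A b x0 mk x β) (s : ℝ) (k : ℕ) :
    norm2 (residv A b (x (k + 1))) ≤ norm2 ((1 - s • A) *ᵥ residv A b (x k)) :=
  residv_ngmresUpdate_single_zero A b x s k (mk k) ▸ (hNG.2 k).2 _

theorem tendsto_zero_of_norm2_succ_le {n : ℕ} {u : ℕ → Fin n → ℝ} {c : ℝ} (hc0 : 0 ≤ c)
    (hc1 : c < 1) (h : ∀ k, norm2 (u (k + 1)) ≤ c * norm2 (u k)) :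
    Tendsto u atTop (nhds 0) := by
  have hgeo (k : ℕ) : ‖(WithLp.toLp 2 (u k) : EuclideanSpace ℝ (Fin n))‖
      ≤ c ^ k * norm2 (u 0) := by
    rw [← norm2_eq_norm_toLp]
    exact le_geom (u := fun k => norm2 (u k)) hc0 k fun j _ => h j
  have hlim : Tendsto (fun k => (WithLp.toLp 2 (u k) : EuclideanSpace ℝ (Fin n))) atTop
      (nhds 0) :=
    squeeze_zero_norm hgeo <| by
      simpa using (tendsto_pow_atTop_nhds_zero_of_lt_one hc0 hc1).mul_const (norm2 (u 0))
  simpa [Function.comp_def] using ((PiLp.continuous_ofLp 2 _).tendsto 0).comp hlim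

/-- for symmetric (positive or negative) definite `A`, NGMRES(m) converges
for any initial guess and
`‖r_{k+1}‖ ≤ (|λ_max - λ_min| / |λ_max + λ_min|) ‖r_k‖`. -/
theorem stmt17 (n : ℕ) (A : Matrix (Fin n) (Fin n) ℝ) (b x0 : Fin n → ℝ)
    (hdef : A.PosDef ∨ (-A).PosDef) (m : ℕ)
    (x : ℕ → Fin n → ℝ) (β : ℕ → ℕ → ℝ)
    (hNG : IsNGMRES A b x0 (fun k => min k m) x β) :
    (∀ k, norm2 (residv A b (x (k + 1))) ≤
      (|sSup (spectrum ℝ A) - sInf (spectrum ℝ A)| /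
        |sSup (spectrum ℝ A) + sInf (spectrum ℝ A)|) * norm2 (residv A b (x k))) ∧
    Filter.Tendsto (fun k => residv A b (x k)) Filter.atTop (nhds 0) := by
  have hA : A.IsHermitian := hdef.elim (·.isHermitian) (isHermitian_neg_iff.mp ·.isHermitian)
  have hstep (k : ℕ) := (hNG.norm2_residv_succ_le _ k).trans <|
    hA.norm2_one_sub_smul_mulVec_le (by positivity) (hA.abs_one_sub_mul_eigenvalues_le hdef) _
  refine ⟨hstep, ?_⟩
  rcases isEmpty_or_nonempty (Fin n) with _ | _
  · exact tendsto_const_nhds.congr fun _ => Subsingleton.elim _ _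
  · have hlt := hA.abs_sSup_sub_sInf_spectrum_lt hdef
    exact tendsto_zero_of_norm2_succ_le (by positivity)
      ((div_lt_one ((abs_nonneg _).trans_lt hlt)).mpr hlt) hstep
end
end
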